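/- Let p : Fin n → ℝ² be a clockwise enumeration of a set P in convex position and let ε ≥ 0, and assume that for every i the closed ball of radius ε centered at p i does not contain all of P. If Q ⊆ P is a valid greedy sequence, then cost(Q, P) ≤ ε. -/

import Mathlib

open Set Metric

noncomputable abbrev Pt := EuclideanSpace ℝ (Fin 2)

/-- The planar determinant `det(u,v) = u₁·v₂ − u₂·v₁`. -/
def detv (u v : Pt) : ℝ := u 0 * v 1 - u 1 * v 0

/-- `cost Q P` is the maximum (as a supremum) over `p ∈ P` of the distance from `p`
to the convex hull of `Q`. -/
noncomputable def cost (Q P : Set Pt) : ℝ :=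
  sSup ((fun p => Metric.infDist p (convexHull ℝ Q)) '' P)

/-- `cost0 p i j` : the maximum distance to the segment `[p i, p j]` among the points
`p v` with `v` clockwise between `i` and `j` (clockwise offsets measured by `Fin`
subtraction, i.e. `(x - i) mod n`). -/
noncomputable def cost0 {n : ℕ} (p : Fin n → Pt) (i j : Fin n) : ℝ :=
  sSup ((fun v => Metric.infDist (p v) (segment ℝ (p i) (p j))) ''
    {v : Fin n | v - i ≤ j - i})

/-- `Q` is a valid greedy sequence for the friend function `f`:
`Q = {p l₁, …, p l_k}` with `l₁ < ⋯ < l_k`, `f l_t = l_{t+1}` for `t < k`,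
`f l_k < l_k`, and (validity) `l₁ ≤ f l_k`. -/
def ValidGreedy {n : ℕ} (p : Fin n → Pt) (f : Fin n → Fin n) (Q : Set Pt) : Prop :=
  ∃ (k : ℕ) (hk : 0 < k) (ℓ : Fin k → Fin n), StrictMono ℓ ∧ Q = p '' Set.range ℓ ∧
    (∀ (t : ℕ) (ht : t + 1 < k), f (ℓ ⟨t, by omega⟩) = ℓ ⟨t + 1, ht⟩) ∧
    f (ℓ ⟨k - 1, by omega⟩) < ℓ ⟨k - 1, by omega⟩ ∧
    ℓ ⟨0, hk⟩ ≤ f (ℓ ⟨k - 1, by omega⟩)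

lemma fin_sub_val_gt {n : ℕ} {a b : Fin n} (h : a < b) :
    ((a - b : Fin n) : ℕ) = a.val + n - b.val := by
  rw [Fin.sub_def]
  have hb := b.2
  have ha := a.2
  have h' : (a : ℕ) < b := h
  simp only []
  rw [Nat.mod_eq_of_lt (by omega)]
  omega

lemma detv_cyc (a b c : Pt) : detv (b - a) (c - a) = detv (c - b) (a - b) := by
  simp [detv]; ring

lemma key (a b c x : Pt)
    (h1 : detv (x - a) (b - a) < 0)
    (h2 : detv (b - x) (c - x) < 0)
    (h3 : detv (c - b) (a - b) < 0)
    (h4 : detv (a - c) (x - c) < 0) :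
    infDist x (segment ℝ a b) ≤ infDist x (segment ℝ a c) := by
  have hne : (segment ℝ a c).Nonempty := ⟨a, left_mem_segment ℝ a c⟩
  have hmain : ∀ q ∈ segment ℝ a c, infDist x (segment ℝ a b) ≤ dist x q := by
    intro q hq
    obtain ⟨α, β, hα, hβ, hαβ, hqe⟩ := hq
    have hα1 : α = 1 - β := by linarith
    subst hα1
    set A := detv (b - a) (x - a) with hAdef
    set B := detv (b - a) (c - a) with hBdef
    set C := detv (x - a) (c - a) with hCdef
    have hA : 0 < A := by
      rw [hAdef]
      simp only [detv, PiLp.sub_apply] at h1 ⊢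
      nlinarith [h1]
    have hB : B < 0 := by rw [hBdef, detv_cyc]; exact h3
    have hC : C < 0 := by rw [hCdef, ← detv_cyc]; exact h4
    have hDd : 0 < C + A - B := by
      have h2' : 0 < detv (x - b) (c - b) := by
        simp only [detv, PiLp.sub_apply] at h2 ⊢
        nlinarith [h2]
      have hid : detv (x - b) (c - b) = C + A - B := by
        rw [hCdef, hAdef, hBdef]
        simp only [detv, PiLp.sub_apply]
        ring
      linarith [hid ▸ h2']
    have cram0 : C * (b 0 - a 0) = B * (x 0 - a 0) - A * (c 0 - a 0) := by
      rw [hCdef, hAdef, hBdef]; simp only [detv, PiLp.sub_apply]; ring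
    have cram1 : C * (b 1 - a 1) = B * (x 1 - a 1) - A * (c 1 - a 1) := by
      rw [hCdef, hAdef, hBdef]; simp only [detv, PiLp.sub_apply]; ring
    set Dden := A - β * B with hDdendef
    have hDden : 0 < Dden := by nlinarith
    have hDden' : Dden ≠ 0 := ne_of_gt hDden
    set t := A / Dden with htdef
    have ht0 : 0 ≤ t := le_of_lt (div_pos hA hDden)
    have ht1 : t ≤ 1 := by
      rw [htdef, div_le_one hDden]; nlinarith
    set u := -β * C / Dden with hudef
    have hu0 : 0 ≤ u := by
      rw [hudef]; apply div_nonneg _ hDden.le; nlinarith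
    have hu1 : u ≤ 1 := by
      rw [hudef, div_le_one hDden, hDdendef]; nlinarith
    set r : Pt := (1 - t) • x + t • q with hrdef
    have hq0 : q 0 = (1 - β) * a 0 + β * c 0 := by
      rw [← hqe]; simp only [PiLp.add_apply, PiLp.smul_apply, smul_eq_mul]
    have hq1 : q 1 = (1 - β) * a 1 + β * c 1 := by
      rw [← hqe]; simp only [PiLp.add_apply, PiLp.smul_apply, smul_eq_mul]
    have hr0 : r 0 = (1 - t) * x 0 + t * q 0 := by
      rw [hrdef]; simp only [PiLp.add_apply, PiLp.smul_apply, smul_eq_mul]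
    have hr1 : r 1 = (1 - t) * x 1 + t * q 1 := by
      rw [hrdef]; simp only [PiLp.add_apply, PiLp.smul_apply, smul_eq_mul]
    have E0 : r 0 = (1 - u) * a 0 + u * b 0 := by
      rw [hr0, hq0, hudef, htdef]
      field_simp
      linear_combination β * cram0
    have E1 : r 1 = (1 - u) * a 1 + u * b 1 := by
      rw [hr1, hq1, hudef, htdef]
      field_simp
      linear_combination β * cram1
    have hrmem : r ∈ segment ℝ a b := by
      refine ⟨1 - u, u, by linarith, hu0, by ring, ?_⟩
      ext i
      fin_cases i
      · show (1 - u) * a 0 + u * b 0 = r 0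
        rw [E0]
      · show (1 - u) * a 1 + u * b 1 = r 1
        rw [E1]
    have hxr : x - r = t • (x - q) := by
      rw [hrdef]; module
    calc infDist x (segment ℝ a b) ≤ dist x r := infDist_le_dist_of_mem hrmem
      _ = t * dist x q := by
          rw [dist_eq_norm, dist_eq_norm, hxr, norm_smul]
          simp [abs_of_nonneg ht0]
      _ ≤ dist x q := mul_le_of_le_one_left dist_nonneg ht1
  conv_rhs => rw [infDist_eq_iInf]
  have := hne.to_subtype
  exact le_ciInf fun q => hmain q q.2

lemma cost0_bound {n : ℕ} (p : Fin n → Pt) (i j v : Fin n) (hv : v - i ≤ j - i) {ε : ℝ}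
    (h : cost0 p i j ≤ ε) :
    infDist (p v) (segment ℝ (p i) (p j)) ≤ ε := by
  refine le_trans (le_csSup ?_ ?_) h
  · exact ((Set.toFinite _).image _).bddAbove
  · exact Set.mem_image_of_mem _ hv

theorem stmt_5 (n : ℕ) (p : Fin n → Pt)
    (hinj : Function.Injective p)
    (hcw : ∀ i j l : Fin n, i < j → j < l → detv (p j - p i) (p l - p i) < 0)
    (ε : ℝ) (hε : 0 ≤ ε)
    (hball : ∀ i : Fin n, ¬ (Set.range p ⊆ Metric.closedBall (p i) ε))
    (f : Fin n → Fin n)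
    (hf : ∀ i : Fin n, f i ≠ i ∧ cost0 p i (f i) ≤ ε ∧
      ∀ j : Fin n, j ≠ i → cost0 p i j ≤ ε → j - i ≤ f i - i)
    (Q : Set Pt) (hQ : ValidGreedy p f Q) :
    cost Q (Set.range p) ≤ ε := by
  obtain ⟨k, hk, ℓ, hmono, hQeq, hstep, hlast, hvalid⟩ := hQ
  subst hQeq
  unfold cost
  refine Real.sSup_le ?_ hε
  rintro y ⟨x, ⟨v, rfl⟩, rfl⟩
  show infDist (p v) (convexHull ℝ (p '' Set.range ℓ)) ≤ ε
  have hn : 0 < n := v.pos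
  have hk1 : k - 1 < k := by omega
  have hk2 : 2 ≤ k := by
    by_contra h
    have hkeq : (⟨k - 1, hk1⟩ : Fin k) = ⟨0, hk⟩ := by
      simp only [Fin.mk.injEq]; omega
    rw [hkeq] at hlast hvalid
    exact absurd (lt_of_le_of_lt hvalid hlast) (lt_irrefl _)
  set L0 := ℓ ⟨0, hk⟩ with hL0def
  set Lk := ℓ ⟨k - 1, hk1⟩ with hLkdef
  have hL0k : L0 < Lk := hmono (by simp only [Fin.mk_lt_mk]; omega)
  have hhull : ∀ s : Fin k, p (ℓ s) ∈ convexHull ℝ (p '' Set.range ℓ) :=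
    fun s => subset_convexHull _ _ ⟨ℓ s, ⟨s, rfl⟩, rfl⟩
  have key_via : ∀ (s t : Fin k) (w : Fin n),
      infDist (p w) (segment ℝ (p (ℓ s)) (p (ℓ t))) ≤ ε →
      infDist (p w) (convexHull ℝ (p '' Set.range ℓ)) ≤ ε := by
    intro s t w h
    refine le_trans (infDist_le_infDist_of_subset ?_ ⟨_, left_mem_segment ℝ _ _⟩) h
    exact segment_subset_convexHull ⟨ℓ s, ⟨s, rfl⟩, rfl⟩ ⟨ℓ t, ⟨t, rfl⟩, rfl⟩
  by_cases hcase : v < L0 ∨ Lk ≤ v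
  · -- wrap-around case
    by_cases hvLk : v = Lk
    · rw [hvLk, infDist_zero_of_mem (hhull _)]; exact hε
    by_cases hvL0 : v = L0
    · rw [hvL0, infDist_zero_of_mem (hhull _)]; exact hε
    have hm_lt : f Lk < Lk := hlast
    have hm_ge : L0 ≤ f Lk := hvalid
    have hc0 : cost0 p Lk (f Lk) ≤ ε := (hf Lk).2.1
    have hvmem : v - Lk ≤ f Lk - Lk := by
      have hb1 := (f Lk).2
      have hb2 := v.2
      have hb3 := Lk.2
      rcases hcase with h | h
      · have hvlt : v < Lk := lt_trans (lt_of_lt_of_le h hm_ge) hm_lt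
        rw [Fin.le_def, fin_sub_val_gt hvlt, fin_sub_val_gt hm_lt]
        have h' : (v : ℕ) < (L0 : ℕ) := h
        have h'' : (L0 : ℕ) ≤ (f Lk : ℕ) := hm_ge
        omega
      · have hlt : Lk < v := lt_of_le_of_ne h (fun e => hvLk e.symm)
        rw [Fin.le_def, Fin.sub_val_of_le hlt.le, fin_sub_val_gt hm_lt]
        have h' : (Lk : ℕ) < (v : ℕ) := hlt
        omega
    have hd : infDist (p v) (segment ℝ (p Lk) (p (f Lk))) ≤ ε :=
      cost0_bound p Lk (f Lk) v hvmem hc0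
    by_cases hmL0 : f Lk = L0
    · rw [hmL0] at hd
      exact key_via ⟨k - 1, hk1⟩ ⟨0, hk⟩ v hd
    · have hmgt : L0 < f Lk := lt_of_le_of_ne hm_ge (fun e => hmL0 e.symm)
      refine key_via ⟨k - 1, hk1⟩ ⟨0, hk⟩ v (le_trans ?_ hd)
      rcases hcase with h | h
      · -- v < L0 < f Lk < Lk
        have h1 : detv (p v - p Lk) (p L0 - p Lk) < 0 := by
          rw [← detv_cyc, ← detv_cyc]
          exact hcw v L0 Lk h (lt_trans hmgt hm_lt)
        have h2 : detv (p L0 - p v) (p (f Lk) - p v) < 0 := hcw v L0 (f Lk) h hmgt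
        have h3 : detv (p (f Lk) - p L0) (p Lk - p L0) < 0 := hcw L0 (f Lk) Lk hmgt hm_lt
        have h4 : detv (p Lk - p (f Lk)) (p v - p (f Lk)) < 0 := by
          rw [← detv_cyc]
          exact hcw v (f Lk) Lk (lt_trans h hmgt) hm_lt
        exact key (p Lk) (p L0) (p (f Lk)) (p v) h1 h2 h3 h4
      · -- L0 < f Lk < Lk < v
        have hlt : Lk < v := lt_of_le_of_ne h (fun e => hvLk e.symm)
        have h1 : detv (p v - p Lk) (p L0 - p Lk) < 0 := by
          rw [← detv_cyc]
          exact hcw L0 Lk v hL0k hlt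
        have h2 : detv (p L0 - p v) (p (f Lk) - p v) < 0 := by
          rw [← detv_cyc, ← detv_cyc]
          exact hcw L0 (f Lk) v hmgt (lt_trans hm_lt hlt)
        have h3 : detv (p (f Lk) - p L0) (p Lk - p L0) < 0 := hcw L0 (f Lk) Lk hmgt hm_lt
        have h4 : detv (p Lk - p (f Lk)) (p v - p (f Lk)) < 0 := hcw (f Lk) Lk v hm_lt hlt
        exact key (p Lk) (p L0) (p (f Lk)) (p v) h1 h2 h3 h4
  · -- middle case
    push_neg at hcase
    obtain ⟨hge, hltk⟩ := hcase
    set S : Finset (Fin k) := Finset.univ.filter (fun t => ℓ t ≤ v) with hSdef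
    have hS : S.Nonempty := ⟨⟨0, hk⟩, by simp [hSdef]; exact hge⟩
    set T := S.max' hS with hTdef
    have hT1 : ℓ T ≤ v := (Finset.mem_filter.mp (S.max'_mem hS)).2
    have hTk : (T : ℕ) + 1 < k := by
      by_contra h
      have hTe : T = ⟨k - 1, hk1⟩ := by
        have := T.2
        simp only [Fin.ext_iff]; omega
      rw [hTe] at hT1
      exact absurd (lt_of_le_of_lt hT1 hltk) (lt_irrefl _)
    have hT2 : v < ℓ ⟨(T : ℕ) + 1, hTk⟩ := by
      by_contra h
      rw [not_lt] at h
      have hmem : (⟨(T : ℕ) + 1, hTk⟩ : Fin k) ∈ S :=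
        Finset.mem_filter.mpr ⟨Finset.mem_univ _, h⟩
      have := S.le_max' _ hmem
      rw [← hTdef] at this
      have : (T : ℕ) + 1 ≤ (T : ℕ) := this
      omega
    have hTeta : (⟨(T : ℕ), by omega⟩ : Fin k) = T := Fin.eta T T.2
    have hstepT : f (ℓ T) = ℓ ⟨(T : ℕ) + 1, hTk⟩ := by
      have := hstep (T : ℕ) hTk
      rwa [hTeta] at this
    have hc0 : cost0 p (ℓ T) (ℓ ⟨(T : ℕ) + 1, hTk⟩) ≤ ε := by
      have := (hf (ℓ T)).2.1
      rwa [hstepT] at this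
    have hTT1 : ℓ T < ℓ ⟨(T : ℕ) + 1, hTk⟩ := hmono (by simp [Fin.lt_def])
    have hvmem : v - ℓ T ≤ ℓ ⟨(T : ℕ) + 1, hTk⟩ - ℓ T := by
      rw [Fin.le_def, Fin.sub_val_of_le hT1, Fin.sub_val_of_le hTT1.le]
      have h1 : (ℓ T : ℕ) ≤ (v : ℕ) := hT1
      have h2 : (v : ℕ) < (ℓ ⟨(T : ℕ) + 1, hTk⟩ : ℕ) := hT2
      omega
    exact key_via T ⟨(T : ℕ) + 1, hTk⟩ v (cost0_bound p _ _ v hvmem hc0)
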